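/- arXiv:1708.00506 — 6 statements merged into one kernel-verified Lean document; each statement's English description precedes it below -/
import Mathlib

section
/- Let f : ℝ → ℝ be continuous on [a,b] and suppose the right derivative f⁺(x) = lim_{h→0+} (f(x+h)-f(x))/h exists for every x in [a,b) and is continuous on [a,b). Then f is continuously differentiable on the open interval (a,b), with f'(x) = f⁺(x) for all x ∈ (a,b). -/
open Set

/-! By the fundamental theorem of calculus for right derivatives, `f y = f a + ∫ x in a..y, g x`
on `[a, b)`. Since `g` is continuous, the right-hand side is differentiable on `(a, b)` with
derivative `g`, and `f` agrees with it on a neighbourhood of each point of `(a, b)`. -/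

section RightDerivative

variable {E : Type*} [NormedAddCommGroup E] [NormedSpace ℝ E] [CompleteSpace E]
  {f g : ℝ → E} {a b : ℝ}

theorem eqOn_add_integral_of_hasDerivWithinAt_Ici (hf : ContinuousOn f (Ico a b))
    (hderiv : ∀ x ∈ Ico a b, HasDerivWithinAt f (g x) (Ici x) x)
    (hg : ContinuousOn g (Ico a b)) :
    EqOn f (fun y => f a + ∫ x in a..y, g x) (Ico a b) := by
  intro y hy
  have hsub : Icc a y ⊆ Ico a b := Icc_subset_Ico_right hy.2
  dsimp only
  rw [intervalIntegral.integral_eq_sub_of_hasDeriv_right_of_le hy.1 (hf.mono hsub)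
    (fun x hx => (hderiv x (hsub (Ioo_subset_Icc_self hx))).mono Ioi_subset_Ici_self)
    ((hg.mono hsub).intervalIntegrable_of_Icc hy.1)]
  abel

theorem hasDerivAt_of_hasDerivWithinAt_Ici (hf : ContinuousOn f (Ico a b))
    (hderiv : ∀ x ∈ Ico a b, HasDerivWithinAt f (g x) (Ici x) x)
    (hg : ContinuousOn g (Ico a b)) {x : ℝ} (hx : x ∈ Ioo a b) :
    HasDerivAt f (g x) x := by
  have hsub : Icc a x ⊆ Ico a b := Icc_subset_Ico_right hx.2
  have hgx : ContinuousAt g x := hg.continuousAt (Ico_mem_nhds_iff.2 hx)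
  have hF : HasDerivAt (fun y => f a + ∫ t in a..y, g t) (g x) x :=
    (intervalIntegral.integral_hasDerivAt_right ((hg.mono hsub).intervalIntegrable_of_Icc hx.1.le)
      ((hg.mono Ioo_subset_Ico_self).stronglyMeasurableAtFilter isOpen_Ioo x hx) hgx).const_add _
  exact hF.congr_of_eventuallyEq <| Filter.eventuallyEq_of_mem (Ico_mem_nhds_iff.2 hx)
    (eqOn_add_integral_of_hasDerivWithinAt_Ici hf hderiv hg)

end RightDerivative

theorem right_deriv_continuous_implies_C1_general (f g : ℝ → ℝ) (a b : ℝ)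
    (hf : ContinuousOn f (Icc a b))
    (hright : ∀ x ∈ Ico a b, HasDerivWithinAt f (g x) (Ici x) x)
    (hg : ContinuousOn g (Ico a b)) :
    (∀ x ∈ Ioo a b, HasDerivAt f (g x) x) ∧ ContinuousOn (deriv f) (Ioo a b) := by
  have hderiv : ∀ x ∈ Ioo a b, HasDerivAt f (g x) x := fun x hx =>
    hasDerivAt_of_hasDerivWithinAt_Ici (hf.mono Ico_subset_Icc_self) hright hg hx
  exact ⟨hderiv, (hg.mono Ioo_subset_Ico_self).congr fun x hx => (hderiv x hx).deriv⟩

/-- If `f` is continuous on `[a,b]`, its right derivative `g x` exists at every point of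
`[a,b)` and `g` is continuous on `[a,b)`, then `f` is continuously differentiable on `(a,b)`
with derivative `g`. -/
theorem right_deriv_continuous_implies_C1 (f g : ℝ → ℝ) (a b : ℝ) (hab : a < b)
    (hf : ContinuousOn f (Icc a b))
    (hright : ∀ x ∈ Ico a b, HasDerivWithinAt f (g x) (Ici x) x)
    (hg : ContinuousOn g (Ico a b)) :
    (∀ x ∈ Ioo a b, HasDerivAt f (g x) x) ∧ ContinuousOn (deriv f) (Ioo a b) :=
  right_deriv_continuous_implies_C1_general f g a b hf hright hg
end

section
/- Let γ ∈ (0,1) and let h : (0,∞) → ℝ be a concave function satisfying the scaling relation h(y/γ²) = h(y)/γ for all y > 0. Then h(y) ≥ 0 for every y > 0. -/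
/-!
The point `y / γ²` is the convex combination of `y` and `y / γ⁴` with weights `1 / (1 + γ²)` and
`γ² / (1 + γ²)`. Concavity together with `h (y / γ²) = h y / γ` and `h (y / γ⁴) = h y / γ²` gives
`2 h y / (1 + γ²) ≤ h y / γ`, that is `(1 - γ)² h y ≥ 0`.
-/

open Set

lemma ConcaveOn.add_mul_apply_div_div_div_le {h : ℝ → ℝ} (hconc : ConcaveOn ℝ (Ioi 0) h)
    {y c : ℝ} (hy : 0 < y) (hc : 0 < c) :
    (h y + c * h (y / c / c)) / (1 + c) ≤ h (y / c) := by
  have hmid : (1 / (1 + c)) • y + (c / (1 + c)) • (y / c / c) = y / c := by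
    rw [smul_eq_mul, smul_eq_mul]
    field_simp
    ring
  have hweights : 1 / (1 + c) + c / (1 + c) = 1 := by field_simp
  have key := hconc.2 (mem_Ioi.mpr hy) (mem_Ioi.mpr (by positivity : 0 < y / c / c))
    (by positivity) (by positivity) hweights
  rw [hmid, smul_eq_mul, smul_eq_mul] at key
  calc (h y + c * h (y / c / c)) / (1 + c)
      = 1 / (1 + c) * h y + c / (1 + c) * h (y / c / c) := by ring
    _ ≤ h (y / c) := key

/-- If `h` is concave on `(0,∞)` and satisfies the scaling relation `h (y/γ²) = h y / γ`
for all `y > 0`, where `γ ∈ (0,1)`, then `h` is nonnegative on `(0,∞)`. -/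
theorem concave_scaling_nonneg (γ : ℝ) (hγ : γ ∈ Set.Ioo (0:ℝ) 1) (h : ℝ → ℝ)
    (hconc : ConcaveOn ℝ (Set.Ioi 0) h)
    (hscale : ∀ y > (0:ℝ), h (y / γ ^ 2) = h y / γ) :
    ∀ y > (0:ℝ), 0 ≤ h y := by
  obtain ⟨hγ0, hγ1⟩ := hγ
  intro y hy
  have key := hconc.add_mul_apply_div_div_div_le hy (pow_pos hγ0 2)
  rw [hscale _ (by positivity), hscale y hy] at key
  have hsum : γ ^ 2 * (h y / γ / γ) = h y := by field_simp
  rw [hsum, div_le_div_iff₀ (by positivity) hγ0] at key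
  have hsq : 0 ≤ h y * (1 - γ) ^ 2 := by linarith
  exact nonneg_of_mul_nonneg_left hsq (pow_pos (sub_pos.mpr hγ1) 2)
end

section
/- Let γ ∈ (0,1) and let h₀ : (0,∞) → ℝ satisfy h₀(y/γ²) = h₀(y)/γ for all y > 0. If h denotes the pointwise infimum of all nonnegative concave majorants of h₀ (assumed finite), then h also satisfies h(y/γ²) = h(y)/γ for all y > 0, and h is itself a nonnegative concave majorant of h₀. -/
/-!
Rescaling `g ↦ (z ↦ c * g (a * z))` with `a, c > 0` maps the nonnegative concave majorants of
`h₀` bijectively onto those of `z ↦ c * h₀ (a * z)`. If `h₀` is invariant under it, so is the set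
of majorants, hence so is their pointwise infimum, because `sInf` commutes with positive scaling.
A pointwise infimum of concave functions bounded below is concave, so the infimum is itself a
nonnegative concave majorant.
-/

open Set Pointwise

def nonnegConcaveMajorants (f : ℝ → ℝ) : Set (ℝ → ℝ) :=
  {g | ConcaveOn ℝ (Ioi 0) g ∧ (∀ y ∈ Ioi (0:ℝ), 0 ≤ g y) ∧ ∀ y ∈ Ioi (0:ℝ), f y ≤ g y}

/-- Junk value `0` (from `Real.sInf_empty`) when `f` has no nonnegative concave majorant. -/
noncomputable def minConcaveMajorant (f : ℝ → ℝ) (y : ℝ) : ℝ :=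
  sInf ((fun g : ℝ → ℝ => g y) '' nonnegConcaveMajorants f)

theorem ConcaveOn.sInf_apply {E : Type*} [AddCommGroup E] [Module ℝ E] {s : Set E}
    {S : Set (E → ℝ)} (hne : S.Nonempty) (hconc : ∀ g ∈ S, ConcaveOn ℝ s g)
    (hbdd : ∀ x ∈ s, BddBelow ((fun g : E → ℝ => g x) '' S)) :
    ConcaveOn ℝ s (fun x => sInf ((fun g : E → ℝ => g x) '' S)) := by
  refine ⟨(hconc _ hne.some_mem).1, fun x hx y hy a b ha hb hab => ?_⟩
  refine le_csInf (hne.image _) ?_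
  rintro _ ⟨g, hg, rfl⟩
  have hgx : sInf ((fun g : E → ℝ => g x) '' S) ≤ g x := csInf_le (hbdd x hx) ⟨g, hg, rfl⟩
  have hgy : sInf ((fun g : E → ℝ => g y) '' S) ≤ g y := csInf_le (hbdd y hy) ⟨g, hg, rfl⟩
  calc a • sInf ((fun g : E → ℝ => g x) '' S) + b • sInf ((fun g : E → ℝ => g y) '' S)
      ≤ a • g x + b • g y := by gcongr
    _ ≤ g (a • x + b • y) := (hconc g hg).2 hx hy ha hb hab

theorem ConcaveOn.comp_const_mul_Ioi {g : ℝ → ℝ} (hg : ConcaveOn ℝ (Ioi 0) g) {a c : ℝ}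
    (ha : 0 < a) (hc : 0 ≤ c) : ConcaveOn ℝ (Ioi 0) (fun z => c * g (a * z)) := by
  have hcomp := hg.comp_linearMap (LinearMap.lsmul ℝ ℝ a)
  have hpre : (LinearMap.lsmul ℝ ℝ a) ⁻¹' Ioi 0 = Ioi 0 := by
    ext z
    simp [mul_pos_iff_of_pos_left ha]
  rw [hpre] at hcomp
  exact hcomp.smul hc

theorem rescale_mem_nonnegConcaveMajorants {f f' g : ℝ → ℝ} (hg : g ∈ nonnegConcaveMajorants f)
    {a c : ℝ} (ha : 0 < a) (hc : 0 ≤ c) (hf' : ∀ z > 0, f' z ≤ c * f (a * z)) :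
    (fun z => c * g (a * z)) ∈ nonnegConcaveMajorants f' := by
  obtain ⟨hconc, hnonneg, hmaj⟩ := hg
  refine ⟨hconc.comp_const_mul_Ioi ha hc, fun z hz => ?_, fun z hz => ?_⟩
  · exact mul_nonneg hc (hnonneg _ (mul_pos ha hz))
  · exact (hf' z hz).trans (mul_le_mul_of_nonneg_left (hmaj _ (mul_pos ha hz)) hc)

theorem minConcaveMajorant_mem {f : ℝ → ℝ} (hne : (nonnegConcaveMajorants f).Nonempty) :
    minConcaveMajorant f ∈ nonnegConcaveMajorants f := by
  have hbdd (y : ℝ) (hy : y ∈ Ioi (0:ℝ)) :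
      BddBelow ((fun g : ℝ → ℝ => g y) '' nonnegConcaveMajorants f) := by
    refine ⟨0, ?_⟩
    rintro _ ⟨g, hg, rfl⟩
    exact hg.2.1 y hy
  refine ⟨ConcaveOn.sInf_apply hne (fun g hg => hg.1) hbdd, fun y hy => ?_, fun y hy => ?_⟩
  · exact le_csInf (hne.image _) (by rintro _ ⟨g, hg, rfl⟩; exact hg.2.1 y hy)
  · exact le_csInf (hne.image _) (by rintro _ ⟨g, hg, rfl⟩; exact hg.2.2 y hy)

theorem image_apply_mul_nonnegConcaveMajorants {f : ℝ → ℝ} {a c : ℝ} (ha : 0 < a) (hc : 0 < c)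
    (hf : ∀ y > 0, f (a * y) = c * f y) (y : ℝ) :
    (fun g : ℝ → ℝ => g (a * y)) '' nonnegConcaveMajorants f =
      c • (fun g : ℝ → ℝ => g y) '' nonnegConcaveMajorants f := by
  ext v
  simp only [mem_image, mem_smul_set, smul_eq_mul]
  constructor
  · rintro ⟨g, hg, rfl⟩
    refine ⟨_, ⟨fun z => c⁻¹ * g (a * z), ?_, rfl⟩, by field_simp⟩
    refine rescale_mem_nonnegConcaveMajorants hg ha (inv_nonneg.2 hc.le) fun z hz => ?_
    rw [hf z hz, inv_mul_cancel_left₀ hc.ne']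
  · rintro ⟨_, ⟨g, hg, rfl⟩, rfl⟩
    refine ⟨fun z => c * g (a⁻¹ * z), ?_, by simp [ha.ne']⟩
    refine rescale_mem_nonnegConcaveMajorants hg (inv_pos.2 ha) hc.le fun z hz => ?_
    rw [← hf _ (mul_pos (inv_pos.2 ha) hz), mul_inv_cancel_left₀ ha.ne']

theorem minConcaveMajorant_mul {f : ℝ → ℝ} {a c : ℝ} (ha : 0 < a) (hc : 0 < c)
    (hf : ∀ y > 0, f (a * y) = c * f y) (y : ℝ) :
    minConcaveMajorant f (a * y) = c * minConcaveMajorant f y := by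
  rw [minConcaveMajorant, image_apply_mul_nonnegConcaveMajorants ha hc hf,
    Real.sInf_smul_of_nonneg hc.le, smul_eq_mul, minConcaveMajorant]

/-- Let `γ ∈ (0,1)` and `h₀ : (0,∞) → ℝ` satisfy `h₀(y/γ²) = h₀(y)/γ`. If `h` is the
pointwise infimum of the (nonempty) family `S` of all nonnegative concave majorants of `h₀`
on `(0,∞)`, then `h` satisfies the same scaling relation and `h` is itself a nonnegative
concave majorant of `h₀` (i.e. `h ∈ S`). -/
theorem mcm_scaling (γ : ℝ) (hγ : γ ∈ Set.Ioo (0:ℝ) 1) (h₀ : ℝ → ℝ)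
    (hscale₀ : ∀ y > (0:ℝ), h₀ (y / γ ^ 2) = h₀ y / γ)
    (S : Set (ℝ → ℝ))
    (hS : S = {g : ℝ → ℝ | ConcaveOn ℝ (Set.Ioi 0) g ∧ (∀ y ∈ Set.Ioi (0:ℝ), 0 ≤ g y) ∧
      ∀ y ∈ Set.Ioi (0:ℝ), h₀ y ≤ g y})
    (hne : S.Nonempty)
    (h : ℝ → ℝ) (hh : ∀ y, h y = sInf ((fun g : ℝ → ℝ => g y) '' S)) :
    (∀ y > (0:ℝ), h (y / γ ^ 2) = h y / γ) ∧ h ∈ S := by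
  obtain ⟨hγ0, -⟩ := hγ
  change S = nonnegConcaveMajorants h₀ at hS
  subst hS
  obtain rfl : h = minConcaveMajorant h₀ := funext hh
  have hscale : ∀ y > 0, h₀ ((γ ^ 2)⁻¹ * y) = γ⁻¹ * h₀ y := fun y hy => by
    rw [← div_eq_inv_mul, hscale₀ y hy, div_eq_inv_mul]
  refine ⟨fun y _ => ?_, minConcaveMajorant_mem hne⟩
  rw [div_eq_inv_mul, div_eq_inv_mul]
  exact minConcaveMajorant_mul (by positivity) (inv_pos.2 hγ0) hscale y
end

section
/- Let c : ℝ → ℝ be measurable with 0 < c_l ≤ c(x) ≤ c_u for all x, let σ > 0, and let f : ℝ → ℝ be a C¹ function, twice differentiable almost everywhere, satisfying (σ²/2) f'' = c f a.e. on [a,b], with f continuous on [a,b]. If f attains a strictly positive local maximum at an interior point x₀ ∈ (a,b), then a contradiction follows; consequently, if f > 0 somewhere on (a,b), then max_{[a,b]} f = max(f(a), f(b)). -/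
open MeasureTheory Set

/-- Maximum principle: if `f` is `C¹` with absolutely continuous derivative (encoded via the
integral representation with density `f''`), and `(σ²/2) f'' = c f` a.e. on `(a,b)` with
`0 < c_l ≤ c ≤ c_u`, then `f` cannot attain a strictly positive local maximum at an interior
point; consequently, if `f > 0` somewhere on `(a,b)`, the maximum of `f` over `[a,b]` is
`max (f a) (f b)`. -/
theorem maximum_principle (σ c_l c_u a b : ℝ) (c f f' f'' : ℝ → ℝ)
    (hσ : 0 < σ) (hcl : 0 < c_l) (hc : ∀ x, c_l ≤ c x ∧ c x ≤ c_u) (hcm : Measurable c)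
    (hab : a < b)
    (hderiv : ∀ x, HasDerivAt f (f' x) x)
    (hf'cont : Continuous f')
    (hAC : ∀ x ∈ Icc a b, f' x = f' a + ∫ t in a..x, f'' t)
    (hint : IntervalIntegrable f'' volume a b)
    (hode : ∀ᵐ x ∂volume, x ∈ Ioo a b → σ ^ 2 / 2 * f'' x = c x * f x) :
    (∀ x₀ ∈ Ioo a b, IsLocalMax f x₀ → 0 < f x₀ → False) ∧
    ((∃ x ∈ Ioo a b, 0 < f x) → IsGreatest (f '' Icc a b) (max (f a) (f b))) := by
  have hfc : Continuous f := by
    refine continuous_iff_continuousAt.mpr fun x => (hderiv x).continuousAt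
  have key : ∀ x₀ ∈ Ioo a b, IsLocalMax f x₀ → 0 < f x₀ → False := by
    intro x₀ hx₀ hmax hpos
    have hf'0 : f' x₀ = 0 := hmax.hasDerivAt_eq_zero (hderiv x₀)
    have ev1 : ∀ᶠ y in nhds x₀, y ∈ Ioo a b := isOpen_Ioo.eventually_mem hx₀
    have ev2 : ∀ᶠ y in nhds x₀, f x₀ / 2 < f y :=
      hfc.continuousAt.eventually (eventually_gt_nhds (by linarith))
    obtain ⟨ε, hε, hball⟩ := Metric.eventually_nhds_iff.mp ((ev1.and ev2).and hmax)
    set x₁ := x₀ + ε / 2 with hx₁def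
    have hx₁ : x₀ < x₁ := by simp [hx₁def]; linarith
    have hIcc_sub : ∀ y ∈ Icc x₀ x₁, (y ∈ Ioo a b ∧ f x₀ / 2 < f y) ∧ f y ≤ f x₀ := by
      intro y hy
      obtain ⟨hy1, hy2⟩ := hy
      rw [hx₁def] at hy2
      apply hball
      rw [Real.dist_eq, abs_lt]
      constructor <;> linarith
    set m : ℝ := c_l * f x₀ / σ ^ 2 with hm
    have hmpos : 0 < m := by positivity
    -- f' x ≥ m * (x - x₀) for x ∈ Icc x₀ x₁
    have hf'lb : ∀ x ∈ Icc x₀ x₁, m * (x - x₀) ≤ f' x := by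
      intro x hx
      have hxab : x ∈ Ioo a b := ((hIcc_sub x hx).1).1
      have hmono : ∀ z, a ≤ z → z ≤ b → IntervalIntegrable f'' volume a z := fun z h1 h2 =>
        hint.mono_set (by
          rw [uIcc_of_le hab.le, uIcc_of_le h1]
          exact Icc_subset_Icc le_rfl h2)
      have hsub1 : IntervalIntegrable f'' volume a x := hmono x hxab.1.le hxab.2.le
      have hsub0 : IntervalIntegrable f'' volume a x₀ := hmono x₀ hx₀.1.le hx₀.2.le
      have heq : f' x = ∫ t in x₀..x, f'' t := by
        have h1 := hAC x ⟨hxab.1.le, hxab.2.le⟩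
        have h2 := hAC x₀ ⟨hx₀.1.le, hx₀.2.le⟩
        rw [h1, ← intervalIntegral.integral_interval_sub_left hsub1 hsub0]
        rw [h2] at hf'0
        linarith
      have hsubx : IntervalIntegrable f'' volume x₀ x := hsub0.symm.trans hsub1
      have hae : (fun _ : ℝ => m) ≤ᵐ[volume.restrict (Icc x₀ x)] f'' := by
        have h1 : ∀ᵐ y ∂volume.restrict (Icc x₀ x),
            y ∈ Ioo a b → σ ^ 2 / 2 * f'' y = c y * f y :=
          ae_restrict_of_ae hode
        have h2 : ∀ᵐ y ∂volume.restrict (Icc x₀ x), y ∈ Icc x₀ x :=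
          ae_restrict_mem measurableSet_Icc
        filter_upwards [h1, h2] with y h1y h2y
        have hyIcc : y ∈ Icc x₀ x₁ := ⟨h2y.1, h2y.2.trans hx.2⟩
        have hy := hIcc_sub y hyIcc
        have hyab : y ∈ Ioo a b := hy.1.1
        have heqy := h1y hyab
        have hσ2 : (0:ℝ) < σ ^ 2 := by positivity
        have hcy := (hc y).1
        have hfy : f x₀ / 2 < f y := hy.1.2
        have hstep : c_l * (f x₀ / 2) ≤ c y * f y := by nlinarith
        rw [hm, div_le_iff₀ hσ2]
        nlinarith
      have := intervalIntegral.integral_mono_ae_restrict hx.1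
        (intervalIntegrable_const (c := m)) hsubx hae
      rw [intervalIntegral.integral_const, smul_eq_mul, mul_comm] at this
      rw [heq]; exact this
    -- strict mono on Icc x₀ x₁
    have hsm : StrictMonoOn f (Icc x₀ x₁) := by
      apply strictMonoOn_of_deriv_pos (convex_Icc x₀ x₁) hfc.continuousOn
      intro x hx
      rw [interior_Icc] at hx
      rw [(hderiv x).deriv]
      have := hf'lb x ⟨hx.1.le, hx.2.le⟩
      nlinarith [hx.1]
    have : f x₀ < f x₁ := hsm (left_mem_Icc.mpr hx₁.le) (right_mem_Icc.mpr hx₁.le) hx₁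
    have := (hIcc_sub x₁ (right_mem_Icc.mpr hx₁.le)).2
    linarith
  refine ⟨key, ?_⟩
  rintro ⟨x, hx, hfx⟩
  obtain ⟨x₀, hx₀mem, hx₀max⟩ := isCompact_Icc.exists_isMaxOn
    (nonempty_Icc.mpr hab.le) hfc.continuousOn
  by_cases hle : f x₀ ≤ max (f a) (f b)
  · constructor
    · rcases le_total (f a) (f b) with h | h
      · rw [max_eq_right h]; exact ⟨b, right_mem_Icc.mpr hab.le, rfl⟩
      · rw [max_eq_left h]; exact ⟨a, left_mem_Icc.mpr hab.le, rfl⟩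
    · rintro y ⟨z, hz, rfl⟩
      exact le_trans (hx₀max hz) hle
  · exfalso
    push_neg at hle
    have hx₀Ioo : x₀ ∈ Ioo a b := by
      have ha' : a < x₀ := by
        rcases eq_or_lt_of_le hx₀mem.1 with h | h
        · exfalso; rw [← h] at hle
          exact absurd (le_max_left (f a) (f b)) (not_le.mpr hle)
        · exact h
      have hb' : x₀ < b := by
        rcases eq_or_lt_of_le hx₀mem.2 with h | h
        · exfalso; rw [h] at hle
          exact absurd (le_max_right (f a) (f b)) (not_le.mpr hle)
        · exact h
      exact ⟨ha', hb'⟩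
    apply key x₀ hx₀Ioo
    · filter_upwards [isOpen_Ioo.eventually_mem hx₀Ioo] with y hy
      exact hx₀max (Ioo_subset_Icc_self hy)
    · exact lt_of_lt_of_le hfx (hx₀max (Ioo_subset_Icc_self hx))
end

section
/- Let σ > 0 and let c : ℝ → ℝ be measurable with 0 < c_l ≤ c(x) ≤ c_u. Let ψ : ℝ → ℝ be a positive increasing C¹ solution of (σ²/2)ψ'' = cψ a.e. with ψ(0) = 1. Then ψ(x) ≤ max( exp(√(2c_l/σ²) x), exp(√(2c_u/σ²) x) ) for all x ∈ ℝ. Similarly, a positive decreasing solution φ with φ(0)=1 satisfies φ(x) ≤ max( exp(−√(2c_l/σ²) x), exp(−√(2c_u/σ²) x) ). -/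
/-!
Write `βₗ = √(2cₗ/σ²)` and `βᵤ = √(2cᵤ/σ²)`, so that `βₗ² ψ ≤ ψ'' ≤ βᵤ² ψ` a.e. The key step is
the differential inequality `βₗ ψ ≤ ψ' ≤ βᵤ ψ`, after which `ψ x e^{-β x}` is monotone and the
bound follows by comparing with `x = 0`. For `ψ' ≤ βᵤ ψ`: where `D = ψ' - βᵤ ψ` is positive,
`D' ≤ -βᵤ D ≤ 0`, so a positive value of `D` persists to the left, making `ψ' ≥ D(x₀) > 0` there
and driving `ψ` negative. For `βₗ ψ ≤ ψ'` the same argument applies to `βₗ ψ - ψ'`, and then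
`ψ'' ≥ βₗ (βₗ ψ) ≥ βₗ D(x₀) > 0` drives `ψ'` negative, contradicting monotonicity.
The decreasing solution `φ` is handled through the increasing solution `x ↦ φ (-x)`.
-/

open MeasureTheory Set Real

/-- `f` is differentiable with derivative `f'`, and `f'` is locally absolutely continuous with
a.e. derivative `f''`. -/
structure HasLocIntegrableSecondDeriv (f f' f'' : ℝ → ℝ) : Prop where
  hasDerivAt : ∀ x, HasDerivAt f (f' x) x
  intervalIntegrable : ∀ a b, IntervalIntegrable f'' volume a b
  sub_eq_integral : ∀ a b, f' b - f' a = ∫ t in a..b, f'' t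

namespace HasLocIntegrableSecondDeriv

variable {f f' f'' : ℝ → ℝ}

theorem of_eq_add_integral (hd : ∀ x, HasDerivAt f (f' x) x)
    (hf' : ∀ x, f' x = f' 0 + ∫ t in (0 : ℝ)..x, f'' t)
    (hint : ∀ a b, IntervalIntegrable f'' volume a b) :
    HasLocIntegrableSecondDeriv f f' f'' where
  hasDerivAt := hd
  intervalIntegrable := hint
  sub_eq_integral a b := by
    rw [hf' b, hf' a, ← intervalIntegral.integral_interval_sub_left (hint 0 b) (hint 0 a)]
    ring

theorem continuous (h : HasLocIntegrableSecondDeriv f f' f'') : Continuous f :=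
  continuous_iff_continuousAt.2 fun x => (h.hasDerivAt x).continuousAt

theorem continuous_deriv (h : HasLocIntegrableSecondDeriv f f' f'') : Continuous f' := by
  have hf' : f' = fun x => f' 0 + ∫ t in (0 : ℝ)..x, f'' t := by
    funext x
    rw [← h.sub_eq_integral 0 x]
    ring
  rw [hf']
  exact continuous_const.add (intervalIntegral.continuous_primitive h.intervalIntegrable 0)

theorem sub_eq_integral_deriv (h : HasLocIntegrableSecondDeriv f f' f'') (a b : ℝ) :
    f b - f a = ∫ t in a..b, f' t :=
  (intervalIntegral.integral_eq_sub_of_hasDerivAt (fun t _ => h.hasDerivAt t)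
    (h.continuous_deriv.intervalIntegrable a b)).symm

theorem sub_eq_integral_deriv_sub_mul (h : HasLocIntegrableSecondDeriv f f' f'') (β a b : ℝ) :
    (f' b - β * f b) - (f' a - β * f a) = ∫ t in a..b, (f'' t - β * f' t) := by
  rw [intervalIntegral.integral_sub (h.intervalIntegrable a b)
      ((h.continuous_deriv.intervalIntegrable a b).const_mul β),
    intervalIntegral.integral_const_mul, ← h.sub_eq_integral, ← h.sub_eq_integral_deriv]
  ring

theorem comp_neg (h : HasLocIntegrableSecondDeriv f f' f'') :
    HasLocIntegrableSecondDeriv (fun x => f (-x)) (fun x => -f' (-x)) (fun x => f'' (-x)) where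
  hasDerivAt x := ((h.hasDerivAt (-x)).comp x (hasDerivAt_neg' x)).congr_deriv (by ring)
  intervalIntegrable a b := by
    simpa using (IntervalIntegrable.iff_comp_neg (by simp)).1 (h.intervalIntegrable (-a) (-b))
  sub_eq_integral a b := by
    rw [intervalIntegral.integral_comp_neg, ← h.sub_eq_integral]
    ring

end HasLocIntegrableSecondDeriv

theorem apply_le_apply_of_deriv_nonpos_where_pos {D G : ℝ → ℝ} (hD : Continuous D)
    (hDG : ∀ a b, D b - D a = ∫ t in a..b, G t) (hG : ∀ᵐ t, 0 < D t → G t ≤ 0)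
    {x x₀ : ℝ} (hx : x ≤ x₀) (hpos : 0 < D x₀) : D x₀ ≤ D x := by
  by_contra! hlt
  obtain ⟨ℓ, hℓ, hℓx₀⟩ := exists_between (max_lt hlt hpos)
  rw [max_lt_iff] at hℓ
  -- `s` is the last time in `[x, x₀]` at which `D ≤ ℓ`; on `(s, x₀]` we have `D > ℓ > 0`.
  set K := Icc x x₀ ∩ {t | D t ≤ ℓ}
  have hKbdd : BddAbove K := ⟨x₀, fun t ht => ht.1.2⟩
  have hsK : sSup K ∈ K := (isClosed_Icc.inter (isClosed_le hD continuous_const)).csSup_mem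
    ⟨x, left_mem_Icc.2 hx, hℓ.1.le⟩ hKbdd
  set s := sSup K
  have hDpos : ∀ t ∈ Ioc s x₀, 0 < D t := fun t ht => by
    by_contra! hDt
    exact (le_csSup hKbdd ⟨⟨hsK.1.1.trans ht.1.le, ht.2⟩, hDt.trans hℓ.2.le⟩).not_gt ht.1
  have hmono : D x₀ - D s ≤ 0 := by
    rw [hDG, intervalIntegral.integral_of_le hsK.1.2]
    refine integral_nonpos_of_ae ((ae_restrict_iff' measurableSet_Ioc).2 ?_)
    filter_upwards [hG] with t ht hmem using ht (hDpos t hmem)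
  have hDs : D s ≤ ℓ := hsK.2
  linarith

theorem exists_neg_of_sub_eq_integral_of_ae_le {F G : ℝ → ℝ}
    (hG : ∀ a b, IntervalIntegrable G volume a b) (hFG : ∀ a b, F b - F a = ∫ t in a..b, G t)
    {x₀ ε : ℝ} (hε : 0 < ε) (hGε : ∀ᵐ t, t ≤ x₀ → ε ≤ G t) : ∃ x ≤ x₀, F x < 0 := by
  set x := x₀ - (|F x₀| + 1) / ε
  have hx : x ≤ x₀ := sub_le_self _ (by positivity)
  have hint : ∫ _ in x..x₀, ε ≤ ∫ t in x..x₀, G t := by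
    refine intervalIntegral.integral_mono_ae_restrict hx intervalIntegrable_const (hG x x₀) ?_
    filter_upwards [ae_restrict_of_ae hGε, ae_restrict_mem measurableSet_Icc] with t ht hmem
      using ht hmem.2
  have hlen : (x₀ - x) * ε = |F x₀| + 1 := by
    simp only [x]
    field_simp
    ring
  rw [intervalIntegral.integral_const, smul_eq_mul, hlen, ← hFG] at hint
  exact ⟨x, hx, by linarith [le_abs_self (F x₀)]⟩

section DifferentialInequalities

variable {f f' f'' : ℝ → ℝ}

theorem deriv_le_mul_of_ae_le_sq_mul (h : HasLocIntegrableSecondDeriv f f' f'')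
    (hpos : ∀ x, 0 < f x) {β : ℝ} (hβ : 0 ≤ β) (hu : ∀ᵐ x, f'' x ≤ β ^ 2 * f x) (x₀ : ℝ) :
    f' x₀ ≤ β * f x₀ := by
  by_contra! hlt
  have hδ : 0 < f' x₀ - β * f x₀ := sub_pos.2 hlt
  have hpersist : ∀ x ≤ x₀, f' x₀ - β * f x₀ ≤ f' x - β * f x := fun x hx =>
    apply_le_apply_of_deriv_nonpos_where_pos (D := fun t => f' t - β * f t)
      (h.continuous_deriv.sub (continuous_const.mul h.continuous))
      (h.sub_eq_integral_deriv_sub_mul β)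
      (hu.mono fun t ht hD => by nlinarith [mul_nonneg hβ hD.le]) hx hδ
  obtain ⟨x, -, hx⟩ := exists_neg_of_sub_eq_integral_of_ae_le
    (fun a b => h.continuous_deriv.intervalIntegrable a b) h.sub_eq_integral_deriv hδ
    (ae_of_all _ fun t ht => by linarith [hpersist t ht, mul_nonneg hβ (hpos t).le])
  exact (hpos x).not_gt hx

theorem mul_le_deriv_of_ae_sq_mul_le (h : HasLocIntegrableSecondDeriv f f' f'')
    (hf' : ∀ x, 0 ≤ f' x) {β : ℝ} (hβ : 0 < β) (hl : ∀ᵐ x, β ^ 2 * f x ≤ f'' x) (x₀ : ℝ) :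
    β * f x₀ ≤ f' x₀ := by
  by_contra! hlt
  have hδ : 0 < β * f x₀ - f' x₀ := sub_pos.2 hlt
  have hpersist : ∀ x ≤ x₀, β * f x₀ - f' x₀ ≤ β * f x - f' x := fun x hx =>
    apply_le_apply_of_deriv_nonpos_where_pos (D := fun t => β * f t - f' t)
      ((continuous_const.mul h.continuous).sub h.continuous_deriv)
      (fun a b => by
        rw [intervalIntegral.integral_neg, ← h.sub_eq_integral_deriv_sub_mul β]
        ring)
      (hl.mono fun t ht hD => by nlinarith [mul_pos hβ hD]) hx hδ
  obtain ⟨x, -, hx⟩ := exists_neg_of_sub_eq_integral_of_ae_le h.intervalIntegrable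
    h.sub_eq_integral (mul_pos hβ hδ)
    (hl.mono fun t ht htx => by nlinarith [hpersist t htx, hf' t])
  exact (hf' x).not_gt hx

theorem antitone_mul_exp_neg_of_deriv_le {β : ℝ}
    (hd : ∀ x, HasDerivAt f (f' x) x) (hle : ∀ x, f' x ≤ β * f x) :
    Antitone fun x => f x * exp (-(β * x)) := by
  have hlin (x : ℝ) : HasDerivAt (fun y => -(β * y)) (-β) x :=
    ((hasDerivAt_id' x).const_mul β).fun_neg.congr_deriv (by ring)
  refine antitone_of_hasDerivAt_nonpos (f' := fun x => (f' x - β * f x) * exp (-(β * x)))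
    (fun x => ((hd x).fun_mul (hlin x).exp).congr_deriv (by ring)) fun x => ?_
  exact mul_nonpos_of_nonpos_of_nonneg (sub_nonpos.2 (hle x)) (exp_pos _).le

theorem le_mul_exp_of_deriv_le {β : ℝ} (hd : ∀ x, HasDerivAt f (f' x) x)
    (hle : ∀ x, f' x ≤ β * f x) {x : ℝ} (hx : 0 ≤ x) : f x ≤ f 0 * exp (β * x) := by
  have hanti : f x * exp (-(β * x)) ≤ f 0 * exp (-(β * 0)) :=
    antitone_mul_exp_neg_of_deriv_le hd hle hx
  rwa [mul_zero, neg_zero, exp_zero, mul_one, exp_neg, ← div_eq_mul_inv,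
    div_le_iff₀ (exp_pos _)] at hanti

theorem le_mul_exp_of_mul_le_deriv {β : ℝ} (hd : ∀ x, HasDerivAt f (f' x) x)
    (hle : ∀ x, β * f x ≤ f' x) {x : ℝ} (hx : x ≤ 0) : f x ≤ f 0 * exp (β * x) := by
  have hanti : -f 0 * exp (-(β * 0)) ≤ -f x * exp (-(β * x)) :=
    antitone_mul_exp_neg_of_deriv_le (fun x => (hd x).neg) (fun x => by simpa using hle x) hx
  rwa [mul_zero, neg_zero, exp_zero, mul_one, neg_mul, neg_le_neg_iff, exp_neg,
    ← div_eq_mul_inv, div_le_iff₀ (exp_pos _)] at hanti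

theorem le_max_exp_of_ae_sq_mul_le_of_ae_le_sq_mul (h : HasLocIntegrableSecondDeriv f f' f'')
    (hpos : ∀ x, 0 < f x) (hmono : Monotone f) (h0 : f 0 = 1) {βₗ βᵤ : ℝ} (hβₗ : 0 < βₗ)
    (hβᵤ : 0 ≤ βᵤ) (hl : ∀ᵐ x, βₗ ^ 2 * f x ≤ f'' x) (hu : ∀ᵐ x, f'' x ≤ βᵤ ^ 2 * f x)
    (x : ℝ) : f x ≤ max (exp (βₗ * x)) (exp (βᵤ * x)) := by
  have hf' : ∀ x, 0 ≤ f' x := fun x => (h.hasDerivAt x).deriv ▸ hmono.deriv_nonneg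
  rcases le_total 0 x with hx | hx
  · have hexp := le_mul_exp_of_deriv_le h.hasDerivAt (deriv_le_mul_of_ae_le_sq_mul h hpos hβᵤ hu) hx
    rw [h0, one_mul] at hexp
    exact hexp.trans (le_max_right _ _)
  · have hexp :=
      le_mul_exp_of_mul_le_deriv h.hasDerivAt (mul_le_deriv_of_ae_sq_mul_le h hf' hβₗ hl) hx
    rw [h0, one_mul] at hexp
    exact hexp.trans (le_max_left _ _)

end DifferentialInequalities

theorem ae_sq_sqrt_mul_le_of_ode {σ k : ℝ} {c f f'' : ℝ → ℝ} (hσ : σ ≠ 0) (hk : 0 ≤ k)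
    (hkc : ∀ x, k ≤ c x) (hf : ∀ x, 0 ≤ f x) (hode : ∀ᵐ x, σ ^ 2 / 2 * f'' x = c x * f x) :
    ∀ᵐ x, √(2 * k / σ ^ 2) ^ 2 * f x ≤ f'' x := by
  filter_upwards [hode] with x hx
  rw [sq_sqrt (by positivity), div_mul_eq_mul_div, div_le_iff₀ (by positivity)]
  nlinarith [mul_le_mul_of_nonneg_right (hkc x) (hf x)]

theorem ae_le_sq_sqrt_mul_of_ode {σ k : ℝ} {c f f'' : ℝ → ℝ} (hσ : σ ≠ 0) (hk : 0 ≤ k)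
    (hck : ∀ x, c x ≤ k) (hf : ∀ x, 0 ≤ f x) (hode : ∀ᵐ x, σ ^ 2 / 2 * f'' x = c x * f x) :
    ∀ᵐ x, f'' x ≤ √(2 * k / σ ^ 2) ^ 2 * f x := by
  filter_upwards [hode] with x hx
  rw [sq_sqrt (by positivity), div_mul_eq_mul_div, le_div_iff₀ (by positivity)]
  nlinarith [mul_le_mul_of_nonneg_right (hck x) (hf x)]

theorem solution_growth_bounds_general (σ c_l c_u : ℝ) (c ψ ψ' ψ'' φ φ' φ'' : ℝ → ℝ)
    (hσ : 0 < σ) (hcl : 0 < c_l) (hc : ∀ x, c_l ≤ c x ∧ c x ≤ c_u)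
    (hψpos : ∀ x, 0 < ψ x) (hψmono : StrictMono ψ) (hψ0 : ψ 0 = 1)
    (hψd : ∀ x, HasDerivAt ψ (ψ' x) x)
    (hψAC : ∀ x, ψ' x = ψ' 0 + ∫ t in (0:ℝ)..x, ψ'' t)
    (hψint : ∀ a b : ℝ, IntervalIntegrable ψ'' volume a b)
    (hψode : ∀ᵐ x ∂volume, σ ^ 2 / 2 * ψ'' x = c x * ψ x)
    (hφpos : ∀ x, 0 < φ x) (hφanti : StrictAnti φ) (hφ0 : φ 0 = 1)
    (hφd : ∀ x, HasDerivAt φ (φ' x) x)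
    (hφAC : ∀ x, φ' x = φ' 0 + ∫ t in (0:ℝ)..x, φ'' t)
    (hφint : ∀ a b : ℝ, IntervalIntegrable φ'' volume a b)
    (hφode : ∀ᵐ x ∂volume, σ ^ 2 / 2 * φ'' x = c x * φ x) :
    (∀ x : ℝ, ψ x ≤ max (Real.exp (Real.sqrt (2 * c_l / σ ^ 2) * x))
        (Real.exp (Real.sqrt (2 * c_u / σ ^ 2) * x))) ∧
    (∀ x : ℝ, φ x ≤ max (Real.exp (-(Real.sqrt (2 * c_l / σ ^ 2)) * x))
        (Real.exp (-(Real.sqrt (2 * c_u / σ ^ 2)) * x))) := by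
  have hσ0 : σ ≠ 0 := hσ.ne'
  have hcu : 0 ≤ c_u := hcl.le.trans ((hc 0).1.trans (hc 0).2)
  have hβₗ : 0 < √(2 * c_l / σ ^ 2) := sqrt_pos.2 (by positivity)
  have hβᵤ : 0 ≤ √(2 * c_u / σ ^ 2) := sqrt_nonneg _
  have hψ := HasLocIntegrableSecondDeriv.of_eq_add_integral hψd hψAC hψint
  have hφ := (HasLocIntegrableSecondDeriv.of_eq_add_integral hφd hφAC hφint).comp_neg
  have hneg := (Measure.measurePreserving_neg (volume : Measure ℝ)).quasiMeasurePreserving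
  refine ⟨le_max_exp_of_ae_sq_mul_le_of_ae_le_sq_mul hψ hψpos hψmono.monotone hψ0 hβₗ hβᵤ
    (ae_sq_sqrt_mul_le_of_ode hσ0 hcl.le (fun x => (hc x).1) (fun x => (hψpos x).le) hψode)
    (ae_le_sq_sqrt_mul_of_ode hσ0 hcu (fun x => (hc x).2) (fun x => (hψpos x).le) hψode),
    fun x => ?_⟩
  have hφnonneg : ∀ x, 0 ≤ φ x := fun x => (hφpos x).le
  simpa using le_max_exp_of_ae_sq_mul_le_of_ae_le_sq_mul hφ (fun x => hφpos (-x))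
    (hφanti.antitone.comp fun _ _ => neg_le_neg) (by simpa using hφ0) hβₗ hβᵤ
    (hneg.ae (ae_sq_sqrt_mul_le_of_ode hσ0 hcl.le (fun x => (hc x).1) hφnonneg hφode))
    (hneg.ae (ae_le_sq_sqrt_mul_of_ode hσ0 hcu (fun x => (hc x).2) hφnonneg hφode)) (-x)

/-- Growth estimates: a positive increasing `C¹` solution `ψ` of `(σ²/2)ψ'' = cψ` a.e. with
`ψ 0 = 1` satisfies `ψ x ≤ max (exp(√(2c_l/σ²) x)) (exp(√(2c_u/σ²) x))`, and a positive
decreasing solution `φ` with `φ 0 = 1` satisfies the analogous bound with negated rates. -/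
theorem solution_growth_bounds (σ c_l c_u : ℝ) (c ψ ψ' ψ'' φ φ' φ'' : ℝ → ℝ)
    (hσ : 0 < σ) (hcl : 0 < c_l) (hc : ∀ x, c_l ≤ c x ∧ c x ≤ c_u) (hcm : Measurable c)
    (hψpos : ∀ x, 0 < ψ x) (hψmono : StrictMono ψ) (hψ0 : ψ 0 = 1)
    (hψd : ∀ x, HasDerivAt ψ (ψ' x) x)
    (hψAC : ∀ x, ψ' x = ψ' 0 + ∫ t in (0:ℝ)..x, ψ'' t)
    (hψint : ∀ a b : ℝ, IntervalIntegrable ψ'' volume a b)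
    (hψode : ∀ᵐ x ∂volume, σ ^ 2 / 2 * ψ'' x = c x * ψ x)
    (hφpos : ∀ x, 0 < φ x) (hφanti : StrictAnti φ) (hφ0 : φ 0 = 1)
    (hφd : ∀ x, HasDerivAt φ (φ' x) x)
    (hφAC : ∀ x, φ' x = φ' 0 + ∫ t in (0:ℝ)..x, φ'' t)
    (hφint : ∀ a b : ℝ, IntervalIntegrable φ'' volume a b)
    (hφode : ∀ᵐ x ∂volume, σ ^ 2 / 2 * φ'' x = c x * φ x) :
    (∀ x : ℝ, ψ x ≤ max (Real.exp (Real.sqrt (2 * c_l / σ ^ 2) * x))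
        (Real.exp (Real.sqrt (2 * c_u / σ ^ 2) * x))) ∧
    (∀ x : ℝ, φ x ≤ max (Real.exp (-(Real.sqrt (2 * c_l / σ ^ 2)) * x))
        (Real.exp (-(Real.sqrt (2 * c_u / σ ^ 2)) * x))) :=
  solution_growth_bounds_general σ c_l c_u c ψ ψ' ψ'' φ φ' φ'' hσ hcl hc hψpos hψmono hψ0 hψd hψAC
    hψint hψode hφpos hφanti hφ0 hφd hφAC hφint hφode
end

section
/- Let F be a c.d.f. with continuous density f on the interior of its convex support, such that (1−F)/f is non-increasing there. Fix p₁ < p₂ (reals in the interior of domain where F(pᵢ − x) < 1). Then the function x ↦ (1 − F(p₁ − x))/(1 − F(p₂ − x)) is non-increasing in x on the set where both numerator and denominator are positive and both p₁−x, p₂−x lie in the interior of the support of f. -/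
open Set

/-! Writing `F⁺ = 1 - F`, the derivative of `x ↦ F⁺(p₁ - x) / F⁺(p₂ - x)` has the sign of
`f(p₁ - x) F⁺(p₂ - x) - F⁺(p₁ - x) f(p₂ - x)`, i.e. of
`F⁺(p₂ - x)/f(p₂ - x) - F⁺(p₁ - x)/f(p₁ - x)`, which is `≤ 0` because `F⁺/f` is non-increasing
and `p₁ - x ≤ p₂ - x`. -/

theorem antitoneOn_div_of_hasDerivAt {s : Set ℝ} (hs : Convex ℝ s) {N D N' D' : ℝ → ℝ}
    (hN : ∀ x ∈ s, HasDerivAt N (N' x) x) (hD : ∀ x ∈ s, HasDerivAt D (D' x) x)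
    (hD0 : ∀ x ∈ s, D x ≠ 0) (hsign : ∀ x ∈ s, N' x * D x - N x * D' x ≤ 0) :
    AntitoneOn (fun x => N x / D x) s := by
  have hderiv : ∀ x ∈ s,
      HasDerivAt (fun x => N x / D x) ((N' x * D x - N x * D' x) / D x ^ 2) x :=
    fun x hx => (hN x hx).div (hD x hx) (hD0 x hx)
  refine antitoneOn_of_deriv_nonpos hs
    (fun x hx => (hderiv x hx).continuousAt.continuousWithinAt)
    (fun x hx => (hderiv x (interior_subset hx)).differentiableAt.differentiableWithinAt)
    (fun x hx => ?_)
  rw [(hderiv x (interior_subset hx)).deriv]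
  exact div_nonpos_of_nonpos_of_nonneg (hsign x (interior_subset hx)) (sq_nonneg _)

theorem hasDerivAt_one_sub_comp_const_sub {F : ℝ → ℝ} {d p x : ℝ}
    (hF : HasDerivAt F d (p - x)) : HasDerivAt (fun y => 1 - F (p - y)) d x := by
  simpa using (hF.comp x ((hasDerivAt_id x).const_sub p)).const_sub 1

theorem hazard_ratio_monotone_general (l u : ℝ) (F f : ℝ → ℝ) (p₁ p₂ : ℝ)
    (hf_pos : ∀ t ∈ Ioo l u, 0 < f t)
    (hF : ∀ t ∈ Ioo l u, HasDerivAt F (f t) t)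
    (hhaz : ∀ s ∈ Ioo l u, ∀ t ∈ Ioo l u, s ≤ t → (1 - F t) / f t ≤ (1 - F s) / f s)
    (hp : p₁ < p₂)
    (x₁ x₂ : ℝ) (hx : x₁ ≤ x₂)
    (hdom : ∀ x ∈ Icc x₁ x₂, p₁ - x ∈ Ioo l u ∧ p₂ - x ∈ Ioo l u ∧ F (p₂ - x) < 1) :
    (1 - F (p₁ - x₂)) / (1 - F (p₂ - x₂)) ≤ (1 - F (p₁ - x₁)) / (1 - F (p₂ - x₁)) := by
  refine antitoneOn_div_of_hasDerivAt (convex_Icc x₁ x₂)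
    (fun x hx => hasDerivAt_one_sub_comp_const_sub (hF _ (hdom x hx).1))
    (fun x hx => hasDerivAt_one_sub_comp_const_sub (hF _ (hdom x hx).2.1))
    (fun x hx => (sub_pos.2 (hdom x hx).2.2).ne') (fun x hx => ?_)
    (left_mem_Icc.2 hx) (right_mem_Icc.2 hx) hx
  obtain ⟨h₁, h₂, -⟩ := hdom x hx
  have hcross := (div_le_div_iff₀ (hf_pos _ h₂) (hf_pos _ h₁)).1
    (hhaz _ h₁ _ h₂ (by linarith))
  linarith

/-- Under the monotone hazard-type condition `(1−F)/f` non-increasing on the interior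
`(l,u)` of the support, and `p₁ < p₂`, the ratio `x ↦ (1 − F(p₁ − x))/(1 − F(p₂ − x))` is
non-increasing in `x` (on the region where both arguments lie in `(l,u)` and the denominator
is positive). -/
theorem hazard_ratio_monotone (l u : ℝ) (F f : ℝ → ℝ) (p₁ p₂ : ℝ)
    (hf_cont : ContinuousOn f (Ioo l u)) (hf_pos : ∀ t ∈ Ioo l u, 0 < f t)
    (hF : ∀ t ∈ Ioo l u, HasDerivAt F (f t) t)
    (hhaz : ∀ s ∈ Ioo l u, ∀ t ∈ Ioo l u, s ≤ t → (1 - F t) / f t ≤ (1 - F s) / f s)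
    (hp : p₁ < p₂)
    (x₁ x₂ : ℝ) (hx : x₁ ≤ x₂)
    (hdom : ∀ x ∈ Icc x₁ x₂, p₁ - x ∈ Ioo l u ∧ p₂ - x ∈ Ioo l u ∧ F (p₂ - x) < 1) :
    (1 - F (p₁ - x₂)) / (1 - F (p₂ - x₂)) ≤ (1 - F (p₁ - x₁)) / (1 - F (p₂ - x₁)) :=
  hazard_ratio_monotone_general l u F f p₁ p₂ hf_pos hF hhaz hp x₁ x₂ hx hdom
end
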